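/- arXiv:2504.16638 — 4 statements merged into one kernel-verified Lean document; each statement's English description precedes it below -/
import Mathlib

section
/- Let Ω ⊆ ℝ^d be measurable, let (ρ_n) ⊂ L^∞(Ω) converge weak-* to ρ in L^∞(Ω), let (u_n) ⊂ L²(Ω) converge strongly to u in L²(Ω), and assume additionally that ρ_n² converges weak-* to ρ² in L^∞(Ω). Then ρ_n u_n converges strongly to ρu in L²(Ω). -/
open MeasureTheory Set Filter Topology
open scoped ENNReal

noncomputable section

variable {α : Type*} [MeasurableSpace α] {μ : Measure α}

private lemma sq_eLpNorm_two {w : α → ℝ} (hw : MemLp w 2 μ) :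
    (eLpNorm w 2 μ) ^ 2 = ENNReal.ofReal (∫ x, (w x) ^ 2 ∂μ) := by
  rw [ofReal_integral_eq_lintegral_ofReal hw.integrable_sq
      (Eventually.of_forall fun x => sq_nonneg _)]
  rw [eLpNorm_eq_lintegral_rpow_enorm_toReal two_ne_zero ENNReal.ofNat_ne_top]
  have h1 : ∀ x, ENNReal.ofReal (w x ^ 2) = ‖w x‖ₑ ^ ((2:ℝ≥0∞).toReal) := by
    intro x
    rw [ENNReal.toReal_ofNat, ENNReal.rpow_two, ← ofReal_norm,
      ← ENNReal.ofReal_pow (norm_nonneg _), Real.norm_eq_abs, sq_abs]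
  simp_rw [h1]
  rw [← ENNReal.rpow_natCast _ 2, ← ENNReal.rpow_mul]
  norm_num

private lemma tendsto_of_sq_tendsto {b : ℕ → ℝ≥0∞}
    (h : Tendsto (fun n => b n ^ 2) atTop (𝓝 0)) : Tendsto b atTop (𝓝 0) := by
  rw [ENNReal.tendsto_nhds_zero] at h ⊢
  intro ε hε
  filter_upwards [h (ε ^ 2) (ENNReal.pow_pos hε 2)] with n hn
  by_contra hlt
  push_neg at hlt
  exact absurd hn (not_le.mpr ((ENNReal.pow_lt_pow_left_iff two_ne_zero).2 hlt))

private lemma exists_uniform_bound {σ : ℕ → α → ℝ} (hσ : ∀ n, MemLp (σ n) ⊤ μ)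
    (hconv : ∀ g : α → ℝ, Integrable g μ →
      ∃ L : ℝ, Tendsto (fun n => ∫ x, σ n x * g x ∂μ) atTop (𝓝 L)) :
    ∃ C : ℝ, 0 ≤ C ∧ ∀ (n : ℕ) (g : α → ℝ), Integrable g μ →
      |∫ x, σ n x * g x ∂μ| ≤ C * ∫ x, |g x| ∂μ := by
  -- a.e. bound for each σ n
  have hbd : ∀ n, ∀ᵐ x ∂μ, ‖σ n x‖ ≤ (eLpNormEssSup (σ n) μ).toReal := by
    intro n
    filter_upwards [ae_le_eLpNormEssSup (f := σ n) (μ := μ)] with x hx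
    have := ENNReal.toReal_mono (hσ n).2.ne hx
    simpa using this
  have hint : ∀ (n : ℕ) (g : α → ℝ), Integrable g μ →
      Integrable (fun x => σ n x * g x) μ := fun n g hg =>
    hg.bdd_mul ((hσ n).aestronglyMeasurable) (hbd n)
  -- the CLMs on L¹
  let T : ℕ → (Lp ℝ 1 μ) →L[ℝ] ℝ := fun n =>
    LinearMap.mkContinuous
      { toFun := fun g => ∫ x, σ n x * (g : α → ℝ) x ∂μ
        map_add' := by
          intro g h
          have h1 : ∫ x, σ n x * ((g + h : Lp ℝ 1 μ) : α → ℝ) x ∂μ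
              = ∫ x, (σ n x * (g : α → ℝ) x + σ n x * (h : α → ℝ) x) ∂μ := by
            refine integral_congr_ae ?_
            filter_upwards [Lp.coeFn_add g h] with x hx
            rw [hx]; simp [mul_add]
          rw [h1, integral_add (hint n _ (L1.integrable_coeFn g))
            (hint n _ (L1.integrable_coeFn h))]
        map_smul' := by
          intro c g
          dsimp only [RingHom.id_apply]
          have h1 : ∫ x, σ n x * ((c • g : Lp ℝ 1 μ) : α → ℝ) x ∂μ
              = ∫ x, c • (σ n x * (g : α → ℝ) x) ∂μ := by
            refine integral_congr_ae ?_
            filter_upwards [Lp.coeFn_smul c g] with x hx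
            rw [hx]; simp [smul_eq_mul]; ring
          rw [h1, integral_smul] }
      ((eLpNormEssSup (σ n) μ).toReal)
      (by
        intro g
        simp only [LinearMap.coe_mk, AddHom.coe_mk]
        calc ‖∫ x, σ n x * (g : α → ℝ) x ∂μ‖
            ≤ ∫ x, ‖σ n x * (g : α → ℝ) x‖ ∂μ := norm_integral_le_integral_norm _
          _ ≤ ∫ x, (eLpNormEssSup (σ n) μ).toReal * ‖(g : α → ℝ) x‖ ∂μ := by
              refine integral_mono_ae ((hint n _ (L1.integrable_coeFn g)).norm) ?_ ?_
              · exact (L1.integrable_coeFn g).norm.const_mul _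
              · filter_upwards [hbd n] with x hx
                rw [norm_mul]
                exact mul_le_mul_of_nonneg_right hx (norm_nonneg _)
          _ = (eLpNormEssSup (σ n) μ).toReal * ‖g‖ := by
              rw [integral_const_mul, L1.norm_eq_integral_norm])
  have hptbdd : ∀ g : Lp ℝ 1 μ, ∃ C, ∀ n, ‖T n g‖ ≤ C := by
    intro g
    obtain ⟨L, hL⟩ := hconv _ (L1.integrable_coeFn g)
    obtain ⟨C, hC⟩ := (hL.norm).bddAbove_range
    exact ⟨C, fun n => hC ⟨n, rfl⟩⟩
  obtain ⟨C', hC'⟩ := banach_steinhaus hptbdd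
  refine ⟨max C' 0, le_max_right _ _, fun n g hg => ?_⟩
  have hTg : T n (hg.toL1 g) = ∫ x, σ n x * g x ∂μ := by
    refine integral_congr_ae ?_
    filter_upwards [hg.coeFn_toL1] with x hx
    rw [hx]
  calc |∫ x, σ n x * g x ∂μ| = ‖T n (hg.toL1 g)‖ := by rw [hTg]; rfl
    _ ≤ ‖T n‖ * ‖hg.toL1 g‖ := (T n).le_opNorm _
    _ ≤ max C' 0 * ∫ x, |g x| ∂μ := by
        have h1 : ‖hg.toL1 g‖ = ∫ x, |g x| ∂μ := by
          rw [L1.norm_eq_integral_norm]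
          refine integral_congr_ae ?_
          filter_upwards [hg.coeFn_toL1] with x hx
          rw [hx]; rfl
        rw [← h1]
        exact mul_le_mul ((hC' n).trans (le_max_left _ _)) le_rfl (norm_nonneg _)
          (le_max_right _ _)
/-- **Weak-* with squares × strong ⇒ strong**: if `ρ_n ⇀* ρ` and `ρ_n² ⇀* ρ²` in
`L^∞(Ω)`, and `u_n → u` in `L²(Ω)`, then `ρ_n u_n → ρ u` strongly in `L²(Ω)`. -/
theorem weakStarSq_mul_strong_strong
    (d : ℕ) (Ω : Set (EuclideanSpace ℝ (Fin d))) (hΩ : MeasurableSet Ω)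
    (ρn : ℕ → EuclideanSpace ℝ (Fin d) → ℝ) (ρ : EuclideanSpace ℝ (Fin d) → ℝ)
    (un : ℕ → EuclideanSpace ℝ (Fin d) → ℝ) (u : EuclideanSpace ℝ (Fin d) → ℝ)
    (hρn : ∀ n, MemLp (ρn n) ⊤ ((volume : Measure (EuclideanSpace ℝ (Fin d))).restrict Ω))
    (hρ : MemLp ρ ⊤ ((volume : Measure (EuclideanSpace ℝ (Fin d))).restrict Ω))
    (hweakstar : ∀ g : EuclideanSpace ℝ (Fin d) → ℝ,
      Integrable g ((volume : Measure (EuclideanSpace ℝ (Fin d))).restrict Ω) →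
      Tendsto (fun n => ∫ x in Ω, ρn n x * g x) atTop (𝓝 (∫ x in Ω, ρ x * g x)))
    (hweakstar_sq : ∀ g : EuclideanSpace ℝ (Fin d) → ℝ,
      Integrable g ((volume : Measure (EuclideanSpace ℝ (Fin d))).restrict Ω) →
      Tendsto (fun n => ∫ x in Ω, (ρn n x) ^ 2 * g x) atTop
        (𝓝 (∫ x in Ω, (ρ x) ^ 2 * g x)))
    (hun : ∀ n, MemLp (un n) 2 ((volume : Measure (EuclideanSpace ℝ (Fin d))).restrict Ω))
    (hu : MemLp u 2 ((volume : Measure (EuclideanSpace ℝ (Fin d))).restrict Ω))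
    (hstrong : Tendsto
      (fun n => eLpNorm (fun x => un n x - u x) 2
        ((volume : Measure (EuclideanSpace ℝ (Fin d))).restrict Ω)) atTop (𝓝 0)) :
    Tendsto (fun n => eLpNorm (fun x => ρn n x * un n x - ρ x * u x) 2
      ((volume : Measure (EuclideanSpace ℝ (Fin d))).restrict Ω)) atTop (𝓝 0) := by
  set μ := (volume : Measure (EuclideanSpace ℝ (Fin d))).restrict Ω with hμdef
  -- products with an L∞ function stay in the same space
  have hmul2 : ∀ (φ w : EuclideanSpace ℝ (Fin d) → ℝ), MemLp φ ⊤ μ → MemLp w 2 μ →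
      MemLp (fun x => φ x * w x) 2 μ := fun φ w hφ hw =>
    (MemLp.smul (E := ℝ) (𝕜 := ℝ) (r := 2) hw hφ).ae_eq
      (Eventually.of_forall fun x => rfl)
  have hmultop : ∀ (φ w : EuclideanSpace ℝ (Fin d) → ℝ), MemLp φ ⊤ μ → MemLp w ⊤ μ →
      MemLp (fun x => φ x * w x) ⊤ μ := fun φ w hφ hw =>
    (MemLp.smul (E := ℝ) (𝕜 := ℝ) (r := ⊤) hw hφ).ae_eq
      (Eventually.of_forall fun x => rfl)
  have hρn2 : ∀ n, MemLp (fun x => (ρn n x) ^ 2) ⊤ μ := by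
    intro n
    have h := hmultop _ _ (hρn n) (hρn n)
    refine h.ae_eq (Eventually.of_forall fun x => ?_)
    ring
  have hρ2 : MemLp (fun x => (ρ x) ^ 2) ⊤ μ := by
    have h := hmultop _ _ hρ hρ
    refine h.ae_eq (Eventually.of_forall fun x => ?_)
    ring
  -- uniform bound from Banach–Steinhaus
  obtain ⟨C, hC0, hC⟩ := exists_uniform_bound (μ := μ) hρn2
    (fun g hg => ⟨_, hweakstar_sq g hg⟩)
  -- the two pieces
  have hv : ∀ n, MemLp (fun x => un n x - u x) 2 μ := fun n => (hun n).sub hu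
  have hA : ∀ n, MemLp (fun x => ρn n x * (un n x - u x)) 2 μ := fun n =>
    hmul2 _ _ (hρn n) (hv n)
  have hB : ∀ n, MemLp (fun x => (ρn n x - ρ x) * u x) 2 μ := fun n =>
    hmul2 _ _ ((hρn n).sub hρ) hu
  -- Term A bound
  have hAbound : ∀ n, eLpNorm (fun x => ρn n x * (un n x - u x)) 2 μ
      ≤ ENNReal.ofReal C ^ (1/2 : ℝ) * eLpNorm (fun x => un n x - u x) 2 μ := by
    intro n
    have hsq : (eLpNorm (fun x => ρn n x * (un n x - u x)) 2 μ) ^ 2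
        ≤ (ENNReal.ofReal C ^ (1/2 : ℝ) * eLpNorm (fun x => un n x - u x) 2 μ) ^ 2 := by
      rw [mul_pow, sq_eLpNorm_two (hA n), sq_eLpNorm_two (hv n),
        ← ENNReal.rpow_natCast (ENNReal.ofReal C ^ (1/2 : ℝ)) 2, ← ENNReal.rpow_mul]
      norm_num
      rw [← ENNReal.ofReal_mul hC0]
      apply ENNReal.ofReal_le_ofReal
      have h1 : ∫ x, (ρn n x * (un n x - u x)) ^ 2 ∂μ
          = ∫ x, (ρn n x) ^ 2 * ((un n x - u x) ^ 2) ∂μ := by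
        congr 1; funext x; ring
      have h2 := hC n (fun x => (un n x - u x) ^ 2) (hv n).integrable_sq
      have h3 : ∫ x, |(un n x - u x) ^ 2| ∂μ = ∫ x, (un n x - u x) ^ 2 ∂μ := by
        congr 1; funext x; exact abs_of_nonneg (sq_nonneg _)
      rw [h1]
      calc ∫ x, (ρn n x) ^ 2 * ((un n x - u x) ^ 2) ∂μ
          ≤ |∫ x, (ρn n x) ^ 2 * ((un n x - u x) ^ 2) ∂μ| := le_abs_self _
        _ ≤ C * ∫ x, |(un n x - u x) ^ 2| ∂μ := h2
        _ = C * ∫ x, (un n x - u x) ^ 2 ∂μ := by rw [h3]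
    by_contra hlt
    push_neg at hlt
    exact absurd hsq (not_le.mpr ((ENNReal.pow_lt_pow_left_iff two_ne_zero).2 hlt))
  have hAlim : Tendsto (fun n => eLpNorm (fun x => ρn n x * (un n x - u x)) 2 μ)
      atTop (𝓝 0) := by
    have hconst : Tendsto (fun n =>
        ENNReal.ofReal C ^ (1/2 : ℝ) * eLpNorm (fun x => un n x - u x) 2 μ) atTop (𝓝 0) := by
      have h := ENNReal.Tendsto.const_mul (a := ENNReal.ofReal C ^ (1/2 : ℝ)) hstrong
        (Or.inr (ENNReal.rpow_ne_top_of_nonneg (by norm_num) ENNReal.ofReal_ne_top))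
      simpa using h
    exact tendsto_of_tendsto_of_tendsto_of_le_of_le tendsto_const_nhds hconst
      (fun n => zero_le) hAbound
  -- Term B limit
  have hbdρ : ∀ᵐ x ∂μ, ‖ρ x‖ ≤ (eLpNormEssSup ρ μ).toReal := by
    filter_upwards [ae_le_eLpNormEssSup (f := ρ) (μ := μ)] with x hx
    simpa using ENNReal.toReal_mono hρ.2.ne hx
  have hbdρn2 : ∀ n, ∀ᵐ x ∂μ, ‖(ρn n x) ^ 2‖
      ≤ (eLpNormEssSup (fun x => (ρn n x) ^ 2) μ).toReal := by
    intro n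
    filter_upwards [ae_le_eLpNormEssSup (f := fun x => (ρn n x) ^ 2) (μ := μ)] with x hx
    simpa using ENNReal.toReal_mono (hρn2 n).2.ne hx
  have hbdρn : ∀ n, ∀ᵐ x ∂μ, ‖ρn n x‖ ≤ (eLpNormEssSup (ρn n) μ).toReal := by
    intro n
    filter_upwards [ae_le_eLpNormEssSup (f := ρn n) (μ := μ)] with x hx
    simpa using ENNReal.toReal_mono (hρn n).2.ne hx
  have hbdρ2 : ∀ᵐ x ∂μ, ‖(ρ x) ^ 2‖ ≤ (eLpNormEssSup (fun x => (ρ x) ^ 2) μ).toReal := by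
    filter_upwards [ae_le_eLpNormEssSup (f := fun x => (ρ x) ^ 2) (μ := μ)] with x hx
    simpa using ENNReal.toReal_mono hρ2.2.ne hx
  have hg1 : Integrable (fun x => u x ^ 2) μ := hu.integrable_sq
  have hg2 : Integrable (fun x => ρ x * u x ^ 2) μ := hg1.bdd_mul hρ.1 hbdρ
  have i1 : ∀ n, Integrable (fun x => (ρn n x) ^ 2 * u x ^ 2) μ := fun n =>
    hg1.bdd_mul (hρn2 n).1 (hbdρn2 n)
  have i2 : ∀ n, Integrable (fun x => ρn n x * (ρ x * u x ^ 2)) μ := fun n =>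
    hg2.bdd_mul (hρn n).1 (hbdρn n)
  have i3 : Integrable (fun x => (ρ x) ^ 2 * u x ^ 2) μ := hg1.bdd_mul hρ2.1 hbdρ2
  have hIconv : Tendsto (fun n => ∫ x, ((ρn n x - ρ x) * u x) ^ 2 ∂μ) atTop (𝓝 0) := by
    have hexp : ∀ n, ∫ x, ((ρn n x - ρ x) * u x) ^ 2 ∂μ
        = (∫ x, (ρn n x) ^ 2 * u x ^ 2 ∂μ) - 2 * (∫ x, ρn n x * (ρ x * u x ^ 2) ∂μ)
          + ∫ x, (ρ x) ^ 2 * u x ^ 2 ∂μ := by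
      intro n
      have hfe : (fun x => ((ρn n x - ρ x) * u x) ^ 2)
          = fun x => ((ρn n x) ^ 2 * u x ^ 2 - 2 * (ρn n x * (ρ x * u x ^ 2)))
            + (ρ x) ^ 2 * u x ^ 2 := by
        funext x; ring
      have isub : Integrable
          (fun x => ρn n x ^ 2 * u x ^ 2 - 2 * (ρn n x * (ρ x * u x ^ 2))) μ :=
        (i1 n).sub ((i2 n).const_mul 2)
      have imul : Integrable (fun x => 2 * (ρn n x * (ρ x * u x ^ 2))) μ :=
        (i2 n).const_mul 2
      rw [hfe, integral_add isub i3, integral_sub (i1 n) imul, integral_const_mul]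
    have t1 := hweakstar_sq (fun x => u x ^ 2) hg1
    have t2 := hweakstar (fun x => ρ x * u x ^ 2) hg2
    have ht2' : (∫ x, ρ x * (ρ x * u x ^ 2) ∂μ) = ∫ x, (ρ x) ^ 2 * u x ^ 2 ∂μ := by
      congr 1; funext x; ring
    rw [hμdef] at t1 t2 ⊢
    rw [ht2'] at t2
    have hcomb := (t1.sub (t2.const_mul 2)).add
      (tendsto_const_nhds (x := ∫ x, (ρ x) ^ 2 * u x ^ 2 ∂μ) (f := atTop))
    have h0 : (∫ x, (ρ x) ^ 2 * u x ^ 2 ∂μ) - 2 * (∫ x, (ρ x) ^ 2 * u x ^ 2 ∂μ)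
        + (∫ x, (ρ x) ^ 2 * u x ^ 2 ∂μ) = 0 := by ring
    rw [h0] at hcomb
    exact hcomb.congr (fun n => (hexp n).symm)
  have hBlim : Tendsto (fun n => eLpNorm (fun x => (ρn n x - ρ x) * u x) 2 μ)
      atTop (𝓝 0) := by
    apply tendsto_of_sq_tendsto
    have hfe : (fun n => eLpNorm (fun x => (ρn n x - ρ x) * u x) 2 μ ^ 2)
        = fun n => ENNReal.ofReal (∫ x, ((ρn n x - ρ x) * u x) ^ 2 ∂μ) :=
      funext fun n => sq_eLpNorm_two (hB n)
    rw [hfe]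
    simpa using ENNReal.tendsto_ofReal hIconv
  -- combine
  have hsum := hAlim.add hBlim
  rw [add_zero] at hsum
  refine tendsto_of_tendsto_of_tendsto_of_le_of_le tendsto_const_nhds hsum
    (fun n => zero_le) (fun n => ?_)
  have heq : eLpNorm (fun x => ρn n x * un n x - ρ x * u x) 2 μ
      = eLpNorm (fun x => ρn n x * (un n x - u x) + (ρn n x - ρ x) * u x) 2 μ := by
    apply eLpNorm_congr_ae
    exact Eventually.of_forall fun x => by ring
  rw [heq]
  exact eLpNorm_add_le (hA n).1 (hB n).1 one_le_two

end
end

section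
/- Let ρ : [0,∞) → L^∞(ℝ²) be such that both ρ and ρ² belong to C_{w*}([0,∞);L^∞(ℝ²)), and let u ∈ C([0,∞);L²(ℝ²)). Then the pointwise product ρu belongs to C([0,∞);L²(ℝ²)). -/
open MeasureTheory Set Filter Topology
open scoped ENNReal

noncomputable section

variable {α : Type*} [MeasurableSpace α] {μ : Measure α}

/-- a.e. bound for an `L^∞` function. -/
theorem aux_ae_bound {f : α → ℝ} (hf : MemLp f ⊤ μ) :
    ∀ᵐ x ∂μ, ‖f x‖ ≤ (eLpNorm f ⊤ μ).toReal := by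
  have h := ae_le_eLpNormEssSup (f := f) (μ := μ)
  have htop : eLpNormEssSup f μ ≠ ⊤ := by
    have := hf.2; rw [eLpNorm_exponent_top] at this; exact this.ne
  filter_upwards [h] with x hx
  have : ((‖f x‖₊ : ℝ≥0∞)).toReal ≤ (eLpNormEssSup f μ).toReal :=
    ENNReal.toReal_mono htop hx
  simpa [eLpNorm_exponent_top, coe_nnnorm] using this

theorem aux_int_mul {f g : α → ℝ} (hf : MemLp f ⊤ μ) (hg : Integrable g μ) :
    Integrable (fun x => f x * g x) μ :=
  hg.bdd_mul hf.1 (aux_ae_bound hf)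

theorem aux_int_sq_mul {f g : α → ℝ} (hf : MemLp f ⊤ μ) (hg : Integrable g μ) :
    Integrable (fun x => f x ^ 2 * g x) μ := by
  refine hg.bdd_mul (c := (eLpNorm f ⊤ μ).toReal ^ 2) ?_ ?_
  · have : (fun x => f x ^ 2) = fun x => f x * f x := funext fun x => pow_two _
    rw [this]; exact hf.1.mul hf.1
  · filter_upwards [aux_ae_bound hf] with x hx
    have h0 : (0:ℝ) ≤ ‖f x‖ := norm_nonneg _
    calc ‖f x ^ 2‖ = ‖f x‖ ^ 2 := by rw [norm_pow]
    _ ≤ (eLpNorm f ⊤ μ).toReal ^ 2 := by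
        exact pow_le_pow_left₀ h0 hx 2

/-- `L²` norm formula. -/
theorem aux_eLpNorm_two_eq {w : α → ℝ} (hw : MemLp w 2 μ) :
    eLpNorm w 2 μ = ENNReal.ofReal (∫ x, w x ^ 2 ∂μ) ^ (2⁻¹ : ℝ) := by
  rw [hw.eLpNorm_eq_integral_rpow_norm (by norm_num) (by norm_num)]
  have h2 : ((2:ℝ≥0∞)).toReal = (2:ℝ) := by norm_num
  rw [h2]
  rw [ENNReal.ofReal_rpow_of_nonneg (integral_nonneg (fun x => sq_nonneg _))
    (by norm_num : (0:ℝ) ≤ 2⁻¹)]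
  congr 2
  refine integral_congr_ae (Eventually.of_forall fun x => ?_)
  simp only [Real.rpow_two, Real.norm_eq_abs, sq_abs]

end

noncomputable section CLM

variable {α : Type*} [MeasurableSpace α] {μ : Measure α}

theorem aux_sq_bound {f g : α → ℝ} (hf : MemLp f ⊤ μ) (hg : Integrable g μ) :
    ‖∫ x, f x ^ 2 * g x ∂μ‖ ≤ (eLpNorm f ⊤ μ).toReal ^ 2 * ∫ x, ‖g x‖ ∂μ := by
  calc ‖∫ x, f x ^ 2 * g x ∂μ‖ ≤ ∫ x, ‖f x ^ 2 * g x‖ ∂μ := norm_integral_le_integral_norm _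
  _ ≤ ∫ x, (eLpNorm f ⊤ μ).toReal ^ 2 * ‖g x‖ ∂μ := by
      refine integral_mono_ae (aux_int_sq_mul hf hg).norm (hg.norm.const_mul _) ?_
      filter_upwards [aux_ae_bound hf] with x hx
      rw [norm_mul, norm_pow]
      exact mul_le_mul_of_nonneg_right (pow_le_pow_left₀ (norm_nonneg _) hx 2) (norm_nonneg _)
  _ = _ := integral_const_mul _ _

/-- The functional `g ↦ ∫ f² g` on `L¹`, for `f ∈ L^∞`. -/
def sqCLM (f : α → ℝ) (hf : MemLp f ⊤ μ) : (α →₁[μ] ℝ) →L[ℝ] ℝ :=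
  LinearMap.mkContinuous
    { toFun := fun g => ∫ x, f x ^ 2 * g x ∂μ
      map_add' := fun g₁ g₂ => by
        rw [← integral_add (aux_int_sq_mul hf (L1.integrable_coeFn g₁))
          (aux_int_sq_mul hf (L1.integrable_coeFn g₂))]
        refine integral_congr_ae ?_
        filter_upwards [Lp.coeFn_add g₁ g₂] with x hx
        rw [hx, Pi.add_apply, mul_add]
      map_smul' := fun c g => by
        simp only [RingHom.id_apply, smul_eq_mul]
        rw [← integral_const_mul]
        refine integral_congr_ae ?_
        filter_upwards [Lp.coeFn_smul c g] with x hx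
        rw [hx, Pi.smul_apply, smul_eq_mul]; ring }
    ((eLpNorm f ⊤ μ).toReal ^ 2)
    (fun g => by
      rw [L1.norm_eq_integral_norm]
      exact aux_sq_bound hf (L1.integrable_coeFn g))

theorem sqCLM_apply {f : α → ℝ} (hf : MemLp f ⊤ μ) (g : α →₁[μ] ℝ) :
    sqCLM f hf g = ∫ x, f x ^ 2 * g x ∂μ := rfl

theorem aux_apply_bound {f : α → ℝ} (hf : MemLp f ⊤ μ) {C : ℝ}
    (hC : ‖sqCLM f hf‖ ≤ C) {h : α → ℝ} (hh : Integrable h μ) (h0 : ∀ x, 0 ≤ h x) :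
    ∫ x, f x ^ 2 * h x ∂μ ≤ C * ∫ x, h x ∂μ := by
  have h1 : sqCLM f hf (hh.toL1 h) = ∫ x, f x ^ 2 * h x ∂μ := by
    rw [sqCLM_apply]
    refine integral_congr_ae ?_
    filter_upwards [hh.coeFn_toL1] with x hx
    rw [hx]
  have h2 : ‖hh.toL1 h‖ = ∫ x, h x ∂μ := by
    rw [L1.norm_of_fun_eq_integral_norm]
    exact integral_congr_ae (Eventually.of_forall fun x => Real.norm_of_nonneg (h0 x))
  calc ∫ x, f x ^ 2 * h x ∂μ ≤ ‖sqCLM f hf (hh.toL1 h)‖ := by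
        rw [h1, Real.norm_eq_abs]; exact le_abs_self _
  _ ≤ ‖sqCLM f hf‖ * ‖hh.toL1 h‖ := (sqCLM f hf).le_opNorm _
  _ ≤ C * ∫ x, h x ∂μ := by
      rw [h2]
      exact mul_le_mul_of_nonneg_right hC (integral_nonneg h0)

end CLM


noncomputable section

/-- The plane `ℝ²`, with its Euclidean structure and Lebesgue measure. -/
abbrev E2 : Type := EuclideanSpace ℝ (Fin 2)

/-- **Product of a weak-* continuous density and an `L²`-continuous function is
`L²`-continuous**: if `ρ, ρ² ∈ C_{w*}([0,∞);L^∞(ℝ²))` and `u ∈ C([0,∞);L²(ℝ²))`,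
then `ρu ∈ C([0,∞);L²(ℝ²))`. -/
theorem product_L2_continuity
    (ρ : ℝ → E2 → ℝ) (u : ℝ → E2 → ℝ)
    -- ρ ∈ C_{w*}([0,∞);L^∞)
    (hρ_mem : ∀ t ∈ Ici (0:ℝ), MemLp (ρ t) ⊤ (volume : Measure E2))
    (hρ_wstar : ∀ g : E2 → ℝ, Integrable g (volume : Measure E2) →
      ContinuousOn (fun t => ∫ x : E2, ρ t x * g x) (Ici 0))
    -- ρ² ∈ C_{w*}([0,∞);L^∞)
    (hρsq_wstar : ∀ g : E2 → ℝ, Integrable g (volume : Measure E2) →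
      ContinuousOn (fun t => ∫ x : E2, (ρ t x) ^ 2 * g x) (Ici 0))
    -- u ∈ C([0,∞);L²)
    (hu_mem : ∀ t ∈ Ici (0:ℝ), MemLp (u t) 2 (volume : Measure E2))
    (hu_cont : ∀ t ∈ Ici (0:ℝ),
      Tendsto (fun s => eLpNorm (fun x => u s x - u t x) 2 (volume : Measure E2))
        (nhdsWithin t (Ici 0)) (𝓝 0)) :
    -- conclusion: ρu ∈ C([0,∞);L²)
    (∀ t ∈ Ici (0:ℝ), MemLp (fun x => ρ t x * u t x) 2 (volume : Measure E2)) ∧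
    (∀ t ∈ Ici (0:ℝ),
      Tendsto (fun s => eLpNorm (fun x => ρ s x * u s x - ρ t x * u t x) 2
        (volume : Measure E2)) (nhdsWithin t (Ici 0)) (𝓝 0)) := by
  -- L∞ × L² multiplication
  have hmem : ∀ s ∈ Ici (0:ℝ), ∀ {w : E2 → ℝ}, MemLp w 2 (volume : Measure E2) →
      MemLp (fun x => ρ s x * w x) 2 (volume : Measure E2) := by
    intro s hs w hw
    have h := MemLp.smul (r := 2) (hρ_mem s hs) hw
    have heq : w • (ρ s) = fun x => ρ s x * w x := funext fun x => mul_comm _ _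
    rwa [heq] at h
  refine ⟨fun t ht => hmem t ht (hu_mem t ht), ?_⟩
  intro t ht
  -- Banach–Steinhaus on a compact neighbourhood K of t in [0,∞)
  set K : Set ℝ := Icc (max (t-1) 0) (t+1) with hKdef
  have hKsub : K ⊆ Ici (0:ℝ) := fun s hs => le_trans (le_max_right _ _) hs.1
  have htK : t ∈ K := ⟨max_le (by linarith) ht, by linarith⟩
  have hKmem : K ∈ 𝓝[Ici 0] t := by
    refine mem_nhdsWithin.2 ⟨Ioo (t-1) (t+1), isOpen_Ioo, ⟨by linarith, by linarith⟩, ?_⟩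
    rintro s ⟨⟨hs1, hs2⟩, hs0⟩
    exact ⟨max_le hs1.le hs0, hs2.le⟩
  obtain ⟨C, hC⟩ : ∃ C, ∀ s : K, ‖sqCLM (ρ s.1) (hρ_mem s.1 (hKsub s.2))‖ ≤ C := by
    apply banach_steinhaus
    intro g
    obtain ⟨C, hC⟩ := isCompact_Icc.exists_bound_of_continuousOn
      ((hρsq_wstar (g : E2 → ℝ) (L1.integrable_coeFn g)).mono hKsub)
    exact ⟨C, fun s => by rw [sqCLM_apply]; exact hC s.1 s.2⟩
  have hC0 : (0:ℝ) ≤ C := le_trans (norm_nonneg _) (hC ⟨t, htK⟩)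
  have key : ∀ s (hs : s ∈ K), ∀ {h : E2 → ℝ}, Integrable h (volume : Measure E2) →
      (∀ x, 0 ≤ h x) → ∫ x : E2, (ρ s x) ^ 2 * h x ≤ C * ∫ x : E2, h x :=
    fun s hs h hh h0 => aux_apply_bound _ (hC ⟨s, hs⟩) hh h0
  set D : ℝ≥0∞ := ENNReal.ofReal C ^ (2⁻¹:ℝ) with hDdef
  have hD : D ≠ ⊤ := ENNReal.rpow_ne_top_of_nonneg (by norm_num) ENNReal.ofReal_ne_top
  -- Term A : eLpNorm (ρ_s (u_s - u_t)) ≤ D * eLpNorm (u_s - u_t) on K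
  have hA_le : ∀ s ∈ K, eLpNorm (fun x => ρ s x * (u s x - u t x)) 2 (volume : Measure E2)
      ≤ D * eLpNorm (fun x => u s x - u t x) 2 (volume : Measure E2) := by
    intro s hs
    have hsI := hKsub hs
    have hv : MemLp (fun x => u s x - u t x) 2 (volume : Measure E2) :=
      (hu_mem s hsI).sub (hu_mem t ht)
    have hmul : MemLp (fun x => ρ s x * (u s x - u t x)) 2 (volume : Measure E2) :=
      hmem s hsI hv
    rw [aux_eLpNorm_two_eq hmul, aux_eLpNorm_two_eq hv]
    have hint : ∫ x : E2, (ρ s x * (u s x - u t x)) ^ 2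
        ≤ C * ∫ x : E2, (u s x - u t x) ^ 2 := by
      have h := key s hs hv.integrable_sq (fun x => sq_nonneg _)
      calc ∫ x : E2, (ρ s x * (u s x - u t x)) ^ 2
          = ∫ x : E2, (ρ s x) ^ 2 * (u s x - u t x) ^ 2 := by
            refine integral_congr_ae (Eventually.of_forall fun x => ?_); ring
      _ ≤ C * ∫ x : E2, (u s x - u t x) ^ 2 := h
    calc ENNReal.ofReal (∫ x : E2, (ρ s x * (u s x - u t x)) ^ 2) ^ (2⁻¹:ℝ)
        ≤ ENNReal.ofReal (C * ∫ x : E2, (u s x - u t x) ^ 2) ^ (2⁻¹:ℝ) :=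
          ENNReal.rpow_le_rpow (ENNReal.ofReal_le_ofReal hint) (by norm_num)
    _ = D * ENNReal.ofReal (∫ x : E2, (u s x - u t x) ^ 2) ^ (2⁻¹:ℝ) := by
          rw [ENNReal.ofReal_mul hC0, ENNReal.mul_rpow_of_nonneg _ _ (by norm_num : (0:ℝ) ≤ 2⁻¹)]
  have hA : Tendsto (fun s => eLpNorm (fun x => ρ s x * (u s x - u t x)) 2
      (volume : Measure E2)) (𝓝[Ici 0] t) (𝓝 0) := by
    have hupper : Tendsto (fun s => D * eLpNorm (fun x => u s x - u t x) 2
        (volume : Measure E2)) (𝓝[Ici 0] t) (𝓝 0) := by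
      have h := ENNReal.Tendsto.const_mul (hu_cont t ht) (Or.inr hD)
      simpa using h
    refine tendsto_of_tendsto_of_tendsto_of_le_of_le' tendsto_const_nhds hupper
      (Eventually.of_forall fun s => zero_le) ?_
    filter_upwards [hKmem] with s hs
    exact hA_le s hs
  -- Term B
  set g₁ : E2 → ℝ := fun x => (u t x) ^ 2 with hg₁def
  have hg₁ : Integrable g₁ (volume : Measure E2) := (hu_mem t ht).integrable_sq
  set g₂ : E2 → ℝ := fun x => ρ t x * (2 * (u t x) ^ 2) with hg₂def
  have hg₂ : Integrable g₂ (volume : Measure E2) := aux_int_mul (hρ_mem t ht) (hg₁.const_mul 2)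
  have hφeq : ∀ s ∈ Ici (0:ℝ), ∫ x : E2, ((ρ s x - ρ t x) * u t x) ^ 2
      = (∫ x : E2, (ρ s x) ^ 2 * g₁ x) - (∫ x : E2, ρ s x * g₂ x)
        + ∫ x : E2, (ρ t x) ^ 2 * g₁ x := by
    intro s hs
    have h1 := aux_int_sq_mul (hρ_mem s hs) hg₁
    have h2 := aux_int_mul (hρ_mem s hs) hg₂
    have h3 := aux_int_sq_mul (hρ_mem t ht) hg₁
    have hsum : ∫ x : E2, ((ρ s x - ρ t x) * u t x) ^ 2
        = ∫ x : E2, ((ρ s x) ^ 2 * g₁ x - ρ s x * g₂ x + (ρ t x) ^ 2 * g₁ x) := by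
      refine integral_congr_ae (Eventually.of_forall fun x => ?_)
      simp only [hg₁def, hg₂def]
      ring
    have h12 : Integrable (fun x => (ρ s x) ^ 2 * g₁ x - ρ s x * g₂ x) (volume : Measure E2) :=
      h1.sub h2
    rw [hsum, integral_add h12 h3, integral_sub h1 h2]
  have hφ : Tendsto (fun s => ∫ x : E2, ((ρ s x - ρ t x) * u t x) ^ 2)
      (𝓝[Ici 0] t) (𝓝 0) := by
    have hc1 : Tendsto (fun s => ∫ x : E2, (ρ s x) ^ 2 * g₁ x) (𝓝[Ici 0] t)
        (𝓝 (∫ x : E2, (ρ t x) ^ 2 * g₁ x)) := (hρsq_wstar g₁ hg₁) t ht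
    have hc2 : Tendsto (fun s => ∫ x : E2, ρ s x * g₂ x) (𝓝[Ici 0] t)
        (𝓝 (∫ x : E2, ρ t x * g₂ x)) := (hρ_wstar g₂ hg₂) t ht
    have hlim : (∫ x : E2, (ρ t x) ^ 2 * g₁ x) - (∫ x : E2, ρ t x * g₂ x)
        + (∫ x : E2, (ρ t x) ^ 2 * g₁ x) = 0 := by
      have h2c : ∫ x : E2, ρ t x * g₂ x = 2 * ∫ x : E2, (ρ t x) ^ 2 * g₁ x := by
        rw [← integral_const_mul]
        refine integral_congr_ae (Eventually.of_forall fun x => ?_)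
        simp only [hg₁def, hg₂def]
        ring
      rw [h2c]; ring
    have h := (hc1.sub hc2).add
      (tendsto_const_nhds : Tendsto (fun _ : ℝ => ∫ x : E2, (ρ t x) ^ 2 * g₁ x)
        (𝓝[Ici 0] t) _)
    rw [hlim] at h
    refine h.congr' ?_
    filter_upwards [self_mem_nhdsWithin] with s hs
    exact (hφeq s hs).symm
  have hmemB : ∀ s ∈ Ici (0:ℝ), MemLp (fun x => (ρ s x - ρ t x) * u t x) 2
      (volume : Measure E2) := by
    intro s hs
    have h1 := hmem s hs (hu_mem t ht)
    have h2 := hmem t ht (hu_mem t ht)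
    have heq : (fun x => (ρ s x - ρ t x) * u t x)
        = fun x => ρ s x * u t x - ρ t x * u t x := funext fun x => by ring
    rw [heq]
    exact h1.sub h2
  have hB : Tendsto (fun s => eLpNorm (fun x => (ρ s x - ρ t x) * u t x) 2
      (volume : Measure E2)) (𝓝[Ici 0] t) (𝓝 0) := by
    have h1 : Tendsto (fun s => ENNReal.ofReal (∫ x : E2, ((ρ s x - ρ t x) * u t x) ^ 2))
        (𝓝[Ici 0] t) (𝓝 0) := by
      have h := (ENNReal.continuous_ofReal.tendsto 0).comp hφ
      simpa [Function.comp_def] using h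
    have h2 : Tendsto (fun s => ENNReal.ofReal
        (∫ x : E2, ((ρ s x - ρ t x) * u t x) ^ 2) ^ (2⁻¹:ℝ)) (𝓝[Ici 0] t) (𝓝 0) := by
      have h := ((ENNReal.continuous_rpow_const (y := (2⁻¹:ℝ))).tendsto 0).comp h1
      simpa [Function.comp_def, ENNReal.zero_rpow_of_pos (by norm_num : (0:ℝ) < 2⁻¹)] using h
    refine h2.congr' ?_
    filter_upwards [self_mem_nhdsWithin] with s hs
    exact (aux_eLpNorm_two_eq (hmemB s hs)).symm
  -- triangle inequality and squeeze
  have htri : ∀ᶠ s in 𝓝[Ici 0] t,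
      eLpNorm (fun x => ρ s x * u s x - ρ t x * u t x) 2 (volume : Measure E2)
      ≤ eLpNorm (fun x => ρ s x * (u s x - u t x)) 2 (volume : Measure E2)
        + eLpNorm (fun x => (ρ s x - ρ t x) * u t x) 2 (volume : Measure E2) := by
    filter_upwards [self_mem_nhdsWithin] with s hs
    have h1 : AEStronglyMeasurable (fun x => ρ s x * (u s x - u t x)) (volume : Measure E2) :=
      (hmem s hs ((hu_mem s hs).sub (hu_mem t ht))).1
    have h2 : AEStronglyMeasurable (fun x => (ρ s x - ρ t x) * u t x) (volume : Measure E2) :=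
      (hmemB s hs).1
    have heq : (fun x => ρ s x * u s x - ρ t x * u t x)
        = (fun x => ρ s x * (u s x - u t x)) + fun x => (ρ s x - ρ t x) * u t x :=
      funext fun x => by simp only [Pi.add_apply]; ring
    rw [heq]
    exact eLpNorm_add_le h1 h2 (by norm_num)
  have hsum : Tendsto (fun s =>
      eLpNorm (fun x => ρ s x * (u s x - u t x)) 2 (volume : Measure E2)
      + eLpNorm (fun x => (ρ s x - ρ t x) * u t x) 2 (volume : Measure E2))
      (𝓝[Ici 0] t) (𝓝 0) := by
    simpa using hA.add hB
  exact tendsto_of_tendsto_of_tendsto_of_le_of_le' tendsto_const_nhds hsum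
    (Eventually.of_forall fun s => zero_le) htri

end
end

section
/- Let C > 0 and define F_C : (0,1) → ℝ by F_C(x) = x·exp(C·√(−ln x)) − (√π·C·e^{C²/4}/2)·Φ(√(−ln x) − C/2), where Φ(y) = (2/√π)∫₀^y e^{−t²} dt. Then for every x ∈ (0,1), F_C is differentiable at x with F_C'(x) = exp(C·√(−ln x)). -/
open MeasureTheory Set Real

noncomputable section

/-- The Gauss error function `Φ(y) = (2/√π) ∫₀^y e^{−t²} dt`. -/
def gaussErf (y : ℝ) : ℝ := (2 / Real.sqrt Real.pi) * ∫ t in (0:ℝ)..y, Real.exp (-t ^ 2)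

/-- The antiderivative `F_C` of `x ↦ exp(C√(−ln x))`. -/
def antideriv (C x : ℝ) : ℝ :=
  x * Real.exp (C * Real.sqrt (-Real.log x))
    - (Real.sqrt Real.pi * C * Real.exp (C ^ 2 / 4) / 2)
        * gaussErf (Real.sqrt (-Real.log x) - C / 2)

lemma hasDerivAt_gaussErf (y : ℝ) :
    HasDerivAt gaussErf ((2 / Real.sqrt Real.pi) * Real.exp (-y ^ 2)) y := by
  have hcont : Continuous fun t : ℝ => Real.exp (-t ^ 2) := by continuity
  have h : HasDerivAt (fun y : ℝ => ∫ t in (0:ℝ)..y, Real.exp (-t ^ 2))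
      (Real.exp (-y ^ 2)) y :=
    (intervalIntegral.integral_hasStrictDerivAt_right
      (hcont.intervalIntegrable _ _) (hcont.stronglyMeasurableAtFilter _ _)
      hcont.continuousAt).hasDerivAt
  exact h.const_mul _

/-- **Differentiation of the antiderivative**: for every `C > 0` and `x ∈ (0,1)`,
`F_C` is differentiable at `x` with `F_C'(x) = exp(C√(−ln x))`. -/
theorem hasDerivAt_antideriv (C : ℝ) (hC : 0 < C) :
    ∀ x ∈ Ioo (0:ℝ) 1,
      HasDerivAt (antideriv C) (Real.exp (C * Real.sqrt (-Real.log x))) x := by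
  intro x hx
  obtain ⟨hx0, hx1⟩ := hx
  set s := Real.sqrt (-Real.log x) with hs_def
  have hlogx : Real.log x < 0 := Real.log_neg hx0 hx1
  have hs_pos : 0 < s := Real.sqrt_pos.mpr (by linarith)
  have hsq : s ^ 2 = -Real.log x := Real.sq_sqrt (by linarith)
  have hlog : HasDerivAt (fun x : ℝ => -Real.log x) (-x⁻¹) x :=
    (Real.hasDerivAt_log hx0.ne').neg
  have hs : HasDerivAt (fun x : ℝ => Real.sqrt (-Real.log x)) (-x⁻¹ / (2 * s)) x :=
    hlog.sqrt (ne_of_gt (by linarith))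
  have hexp : HasDerivAt (fun x : ℝ => Real.exp (C * Real.sqrt (-Real.log x)))
      (Real.exp (C * s) * (C * (-x⁻¹ / (2 * s)))) x := (hs.const_mul C).exp
  have h1 : HasDerivAt (fun x : ℝ => x * Real.exp (C * Real.sqrt (-Real.log x)))
      (1 * Real.exp (C * s) + x * (Real.exp (C * s) * (C * (-x⁻¹ / (2 * s))))) x :=
    (hasDerivAt_id x).mul hexp
  have hinner : HasDerivAt (fun x : ℝ => Real.sqrt (-Real.log x) - C / 2)
      (-x⁻¹ / (2 * s)) x := hs.sub_const _
  have hG : HasDerivAt (fun x : ℝ => gaussErf (Real.sqrt (-Real.log x) - C / 2))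
      ((2 / Real.sqrt Real.pi) * Real.exp (-(s - C / 2) ^ 2) * (-x⁻¹ / (2 * s))) x :=
    by have := (hasDerivAt_gaussErf (s - C / 2)).comp x hinner; exact this
  have hK : HasDerivAt (fun x : ℝ =>
      (Real.sqrt Real.pi * C * Real.exp (C ^ 2 / 4) / 2) *
        gaussErf (Real.sqrt (-Real.log x) - C / 2))
      ((Real.sqrt Real.pi * C * Real.exp (C ^ 2 / 4) / 2) *
        ((2 / Real.sqrt Real.pi) * Real.exp (-(s - C / 2) ^ 2) * (-x⁻¹ / (2 * s)))) x :=
    hG.const_mul _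
  have hmain := h1.sub hK
  have hval : Real.exp (-(s - C / 2) ^ 2)
      = x * Real.exp (C * s) * Real.exp (-(C ^ 2 / 4)) := by
    rw [← Real.exp_log hx0, ← Real.exp_add, ← Real.exp_add]
    congr 1
    have : (s - C / 2) ^ 2 = s ^ 2 - C * s + C ^ 2 / 4 := by ring
    rw [this, hsq]; ring
  have hπ : Real.sqrt Real.pi ≠ 0 := by positivity
  have hEE : Real.exp (C ^ 2 / 4) * Real.exp (-C ^ 2 / 4) = 1 := by
    rw [← Real.exp_add, show C ^ 2 / 4 + -C ^ 2 / 4 = 0 by ring, Real.exp_zero]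
  refine hmain.congr_deriv (Eq.symm ?_)
  rw [hval]
  field_simp
  rw [neg_div] at hEE
  linear_combination (-C) * hEE
end
end

section
/- Let C > 0, p ∈ (1,∞) and t ∈ (0,∞). Then there exists a constant L = L(p,C) > 0, depending only on p and C and independent of t, such that for every f ∈ L^p((0,t)) one has ∫₀ᵗ |(1/s)∫₀ˢ exp(C·|ln(τ/s)|^{1/2})·f(τ) dτ|^p ds ≤ L·∫₀ᵗ |f(τ)|^p dτ. -/
open MeasureTheory Set Real
open scoped ENNReal

noncomputable section

private lemma hardy_integrableOn_rpow_Ioo {s r : ℝ} (hr : -1 < r) :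
    IntegrableOn (fun τ => τ ^ r) (Ioo (0:ℝ) s) volume :=
  ((intervalIntegral.intervalIntegrable_rpow' (a := 0) (b := s) hr).1).mono_set
    Ioo_subset_Ioc_self

private lemma hardy_integral_rpow_Ioo {s r : ℝ} (hs : 0 < s) (hr : -1 < r) :
    ∫ τ in Ioo (0:ℝ) s, τ ^ r = s ^ (r + 1) / (r + 1) := by
  rw [← integral_Ioc_eq_integral_Ioo, ← intervalIntegral.integral_of_le hs.le,
    integral_rpow (Or.inl hr), Real.zero_rpow (by linarith), sub_zero]

private lemma hardy_sqrt_bound {C ε x : ℝ} (hε : 0 < ε) (hx : 0 ≤ x) :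
    C * x ^ ((1:ℝ)/2) ≤ ε * x + C ^ 2 / (4 * ε) := by
  rw [← Real.sqrt_eq_rpow]
  have h6 : C * Real.sqrt x - ε * x ≤ C ^ 2 / (4 * ε) := by
    have h7 : 4 * ε ^ 2 * Real.sqrt x ^ 2 = 4 * ε ^ 2 * x := by rw [Real.sq_sqrt hx]
    rw [le_div_iff₀ (by positivity : (0:ℝ) < 4 * ε)]
    nlinarith [sq_nonneg (2 * ε * Real.sqrt x - C), h7]
  linarith

private lemma hardy_kernel_le {C ε τ s : ℝ} (hε : 0 < ε) (h0 : 0 < τ) (hτs : τ < s) :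
    Real.exp (C * |Real.log (τ / s)| ^ ((1:ℝ)/2))
      ≤ Real.exp (C ^ 2 / (4 * ε)) * (τ / s) ^ (-ε) := by
  have hs : 0 < s := h0.trans hτs
  have hts : 0 < τ / s := div_pos h0 hs
  have hlog : Real.log (τ / s) < 0 := Real.log_neg hts ((div_lt_one hs).2 hτs)
  have h2 : (τ / s) ^ (-ε) = Real.exp (ε * |Real.log (τ / s)|) := by
    rw [Real.rpow_def_of_pos hts, abs_of_neg hlog]
    congr 1
    ring
  rw [h2, ← Real.exp_add]
  refine Real.exp_le_exp.2 ?_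
  linarith [hardy_sqrt_bound (C := C) hε (abs_nonneg (Real.log (τ / s)))]

/-- **A Hardy-type inequality** (extension of Hao–Shao–Wei–Zhang, Lemma 5.2): for every
`C > 0` and `p ∈ (1,∞)` there is a constant `L = L(p,C)`, independent of `t`, such that
for every `f ∈ L^p(0,t)`,
`∫₀ᵗ |(1/s)∫₀ˢ exp(C |ln(τ/s)|^{1/2}) f(τ) dτ|^p ds ≤ L ∫₀ᵗ |f|^p`. -/
theorem hardy_type_inequality (C p : ℝ) (hC : 0 < C) (hp : 1 < p) :
    ∃ L : ℝ, 0 < L ∧ ∀ t : ℝ, 0 < t → ∀ f : ℝ → ℝ,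
      IntegrableOn (fun τ => |f τ| ^ p) (Ioo 0 t) (volume : Measure ℝ) →
      ∫ s in Ioo (0:ℝ) t,
          |(1 / s) * ∫ τ in Ioo (0:ℝ) s,
            Real.exp (C * |Real.log (τ / s)| ^ ((1:ℝ)/2)) * f τ| ^ p
        ≤ L * ∫ τ in Ioo (0:ℝ) t, |f τ| ^ p := by
  have hp0 : 0 < p := lt_trans one_pos hp
  have hp0' : p ≠ 0 := ne_of_gt hp0
  have hp1 : p - 1 ≠ 0 := sub_ne_zero.2 (ne_of_gt hp)
  set ε : ℝ := (p - 1) / (2 * p) with hεdef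
  have hε : 0 < ε := div_pos (by linarith) (by linarith)
  set A : ℝ := (p + 1) / (2 * p) with hAdef
  have hA0 : 0 < A := div_pos (by linarith) (by linarith)
  have hA1 : A < 1 := (div_lt_one (by linarith)).2 (by linarith)
  have h1A : 0 < 1 - A := by linarith
  set q : ℝ := p.conjExponent with hqdef
  have hpq : p.HolderConjugate q := Real.HolderConjugate.conjExponent hp
  have hq0 : 0 < q := hpq.symm.pos
  have hq_eq : q = p / (p - 1) := rfl
  set M : ℝ := Real.exp (C ^ 2 / (4 * ε)) with hMdef
  have hM : 0 < M := Real.exp_pos _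
  set Kc : ℝ := M ^ p * (1 - A) ^ (1 - p) with hKcdef
  have hKc0 : 0 < Kc := mul_pos (Real.rpow_pos_of_pos hM p) (Real.rpow_pos_of_pos h1A _)
  -- exponent identities
  have he1 : -(A / q) + ε / p = -ε := by
    rw [hεdef, hAdef, hq_eq]
    field_simp
    ring
  have he2 : -(A / q) * q = -A := by field_simp
  have he3 : ε / p * p = ε := by field_simp
  have he4 : 1 / q * p = p - 1 := by rw [hq_eq]; field_simp
  have hmA : -1 < -A := by linarith
  clear_value ε A q M Kc
  refine ⟨Kc * ε⁻¹, mul_pos hKc0 (inv_pos.2 hε), ?_⟩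
  intro t ht f hf
  have hg_meas : AEMeasurable (fun τ => |f τ| ^ p) (volume.restrict (Ioo (0:ℝ) t)) :=
    hf.1.aemeasurable
  have habs_meas : AEMeasurable (fun τ => |f τ|) (volume.restrict (Ioo (0:ℝ) t)) := by
    have h1 : Measurable fun x : ℝ => x ^ p⁻¹ := measurable_id.pow_const _
    have h2 := h1.comp_aemeasurable hg_meas
    rwa [show ((fun x : ℝ => x ^ p⁻¹) ∘ fun τ => |f τ| ^ p) = fun τ => |f τ| from
      funext fun τ => Real.rpow_rpow_inv (abs_nonneg _) hp0'] at h2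
  set Y : ℝ → ℝ≥0∞ :=
    fun s => ∫⁻ τ in Ioo (0:ℝ) s, ENNReal.ofReal (τ ^ ε * |f τ| ^ p) with hYdef
  -- pointwise (in s) estimate
  have key : ∀ s ∈ Ioo (0:ℝ) t,
      ENNReal.ofReal (|(1 / s) * ∫ τ in Ioo (0:ℝ) s,
          Real.exp (C * |Real.log (τ / s)| ^ ((1:ℝ)/2)) * f τ| ^ p)
        ≤ ENNReal.ofReal (Kc * s ^ (-1 - ε)) * Y s := by
    rintro s ⟨hs0, hst⟩
    have hμs : volume.restrict (Ioo (0:ℝ) s) ≤ volume.restrict (Ioo (0:ℝ) t) :=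
      Measure.restrict_mono (Ioo_subset_Ioo le_rfl hst.le) le_rfl
    have habs_s : AEMeasurable (fun τ => |f τ|) (volume.restrict (Ioo (0:ℝ) s)) :=
      habs_meas.mono_measure hμs
    have hae : ∀ᵐ τ ∂(volume.restrict (Ioo (0:ℝ) s)), τ ∈ Ioo (0:ℝ) s :=
      ae_restrict_mem measurableSet_Ioo
    set I : ℝ := ∫ τ in Ioo (0:ℝ) s,
      Real.exp (C * |Real.log (τ / s)| ^ ((1:ℝ)/2)) * f τ with hIdef
    set J : ℝ≥0∞ := ∫⁻ τ in Ioo (0:ℝ) s,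
      ENNReal.ofReal (Real.exp (C * |Real.log (τ / s)| ^ ((1:ℝ)/2)) * |f τ|) with hJdef
    have hAI : ENNReal.ofReal |I| ≤ J := by
      rw [hIdef, hJdef, ← Real.enorm_eq_ofReal_abs]
      refine le_trans (enorm_integral_le_lintegral_enorm _) (le_of_eq ?_)
      refine lintegral_congr fun τ => ?_
      rw [Real.enorm_eq_ofReal_abs, abs_mul, abs_of_pos (Real.exp_pos _)]
    set F₁ : ℝ → ℝ≥0∞ := fun τ => ENNReal.ofReal ((τ / s) ^ (-(A / q))) with hF₁def
    set F₂ : ℝ → ℝ≥0∞ := fun τ => ENNReal.ofReal (M * ((τ / s) ^ (ε / p) * |f τ|)) with hF₂def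
    have hF₁m : AEMeasurable F₁ (volume.restrict (Ioo (0:ℝ) s)) :=
      (((measurable_id.div_const s).pow_const _).ennreal_ofReal).aemeasurable
    have hF₂m : AEMeasurable F₂ (volume.restrict (Ioo (0:ℝ) s)) := by
      refine AEMeasurable.ennreal_ofReal ?_
      exact aemeasurable_const.mul
        ((((measurable_id.div_const s).pow_const (ε / p)).aemeasurable).mul habs_s)
    have hB1 : J ≤ ∫⁻ τ in Ioo (0:ℝ) s, (F₁ * F₂) τ := by
      refine lintegral_mono_ae (hae.mono fun τ hτ => ?_)
      rcases hτ with ⟨hτ0, hτs⟩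
      have hts : 0 < τ / s := div_pos hτ0 hs0
      show ENNReal.ofReal _ ≤ F₁ τ * F₂ τ
      rw [hF₁def, hF₂def, ← ENNReal.ofReal_mul (Real.rpow_nonneg hts.le _)]
      apply ENNReal.ofReal_le_ofReal
      have hrw : (τ / s) ^ (-(A / q)) * (M * ((τ / s) ^ (ε / p) * |f τ|))
          = M * ((τ / s) ^ (-(A / q)) * (τ / s) ^ (ε / p)) * |f τ| := by ring
      rw [hrw, ← Real.rpow_add hts, he1]
      have hker := hardy_kernel_le (C := C) (ε := ε) hε hτ0 hτs
      rw [← hMdef] at hker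
      exact mul_le_mul_of_nonneg_right hker (abs_nonneg _)
    have hB2 := ENNReal.lintegral_mul_le_Lp_mul_Lq
      (volume.restrict (Ioo (0:ℝ) s)) hpq.symm hF₁m hF₂m
    have hX : (∫⁻ τ in Ioo (0:ℝ) s, F₁ τ ^ q) = ENNReal.ofReal (s * (1 - A)⁻¹) := by
      have hcongr : ∀ᵐ τ ∂(volume.restrict (Ioo (0:ℝ) s)),
          F₁ τ ^ q = ENNReal.ofReal (τ ^ (-A) * s ^ A) := by
        refine hae.mono fun τ hτ => ?_
        rcases hτ with ⟨hτ0, hτs⟩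
        have hts0 : (0:ℝ) ≤ τ / s := le_of_lt (div_pos hτ0 hs0)
        rw [hF₁def, ENNReal.ofReal_rpow_of_nonneg (Real.rpow_nonneg hts0 _) hq0.le,
          ← Real.rpow_mul hts0, he2, Real.div_rpow hτ0.le hs0.le, div_eq_mul_inv,
          Real.rpow_neg hs0.le, inv_inv]
      have hint : Integrable (fun τ => τ ^ (-A) * s ^ A)
          (volume.restrict (Ioo (0:ℝ) s)) :=
        (hardy_integrableOn_rpow_Ioo hmA).mul_const _
      have hnn : 0 ≤ᵐ[volume.restrict (Ioo (0:ℝ) s)] fun τ => τ ^ (-A) * s ^ A :=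
        hae.mono fun τ hτ =>
          mul_nonneg (Real.rpow_nonneg hτ.1.le _) (Real.rpow_nonneg hs0.le _)
      have hval : ∫ τ in Ioo (0:ℝ) s, τ ^ (-A) * s ^ A = s * (1 - A)⁻¹ := by
        rw [integral_mul_const, hardy_integral_rpow_Ioo hs0 hmA, div_mul_eq_mul_div,
          ← Real.rpow_add hs0, (by ring : -A + 1 + A = (1:ℝ)), Real.rpow_one,
          div_eq_mul_inv, (by ring : -A + 1 = 1 - A)]
      rw [lintegral_congr_ae hcongr, ← ofReal_integral_eq_lintegral_ofReal hint hnn, hval]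
    have hZ : (∫⁻ τ in Ioo (0:ℝ) s, F₂ τ ^ p)
        = ENNReal.ofReal (M ^ p * s ^ (-ε)) * Y s := by
      have hsε : s ^ ε ≠ 0 := ne_of_gt (Real.rpow_pos_of_pos hs0 _)
      have hcongr : ∀ᵐ τ ∂(volume.restrict (Ioo (0:ℝ) s)),
          F₂ τ ^ p = ENNReal.ofReal (M ^ p * s ^ (-ε))
            * ENNReal.ofReal (τ ^ ε * |f τ| ^ p) := by
        refine hae.mono fun τ hτ => ?_
        rcases hτ with ⟨hτ0, hτs⟩
        have hts0 : (0:ℝ) ≤ τ / s := le_of_lt (div_pos hτ0 hs0)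
        have hnn2 : (0:ℝ) ≤ M * ((τ / s) ^ (ε / p) * |f τ|) :=
          mul_nonneg hM.le (mul_nonneg (Real.rpow_nonneg hts0 _) (abs_nonneg _))
        rw [hF₂def, ENNReal.ofReal_rpow_of_nonneg hnn2 hp0.le,
          ← ENNReal.ofReal_mul (mul_nonneg (Real.rpow_nonneg hM.le _)
            (Real.rpow_nonneg hs0.le _))]
        congr 1
        rw [Real.mul_rpow hM.le (mul_nonneg (Real.rpow_nonneg hts0 _) (abs_nonneg _)),
          Real.mul_rpow (Real.rpow_nonneg hts0 _) (abs_nonneg _),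
          ← Real.rpow_mul hts0, he3, Real.div_rpow hτ0.le hs0.le, Real.rpow_neg hs0.le]
        field_simp
      rw [lintegral_congr_ae hcongr, lintegral_const_mul' _ _ ENNReal.ofReal_ne_top]
    -- assemble the pointwise bound
    have hs1 : (0:ℝ) < 1 / s := by positivity
    have hcoef : (1 / s) ^ p * ((s * (1 - A)⁻¹) ^ (p - 1) * (M ^ p * s ^ (-ε)))
        = Kc * s ^ (-1 - ε) := by
      have c1 : (1 / s) ^ p = s ^ (-p) := by
        rw [one_div, Real.inv_rpow hs0.le, ← Real.rpow_neg hs0.le]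
      have c2 : (s * (1 - A)⁻¹) ^ (p - 1) = s ^ (p - 1) * (1 - A) ^ (1 - p) := by
        rw [Real.mul_rpow hs0.le (inv_nonneg.2 h1A.le), Real.inv_rpow h1A.le,
          ← Real.rpow_neg h1A.le, (by ring : -(p - 1) = 1 - p)]
      have c3 : s ^ (-p) * s ^ (p - 1) * s ^ (-ε) = s ^ (-1 - ε) := by
        rw [← Real.rpow_add hs0, ← Real.rpow_add hs0]
        congr 1
        ring
      rw [c1, c2, hKcdef, ← c3]
      ring
    calc ENNReal.ofReal (|(1 / s) * I| ^ p)
        = ENNReal.ofReal ((1 / s) ^ p) * ENNReal.ofReal |I| ^ p := by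
          rw [abs_mul, abs_of_pos hs1,
            Real.mul_rpow hs1.le (abs_nonneg _),
            ENNReal.ofReal_mul (Real.rpow_nonneg hs1.le _),
            ENNReal.ofReal_rpow_of_nonneg (abs_nonneg _) hp0.le]
      _ ≤ ENNReal.ofReal ((1 / s) ^ p) * J ^ p :=
          mul_le_mul_right (ENNReal.rpow_le_rpow hAI hp0.le) _
      _ ≤ ENNReal.ofReal ((1 / s) ^ p) *
            ((ENNReal.ofReal (s * (1 - A)⁻¹)) ^ (1 / q)
              * ((ENNReal.ofReal (M ^ p * s ^ (-ε)) * Y s) ^ (1 / p))) ^ p := by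
          refine mul_le_mul_right (ENNReal.rpow_le_rpow ?_ hp0.le) _
          refine le_trans hB1 (le_trans hB2 (le_of_eq ?_))
          rw [hX, hZ]
      _ = ENNReal.ofReal (Kc * s ^ (-1 - ε)) * Y s := by
          rw [ENNReal.mul_rpow_of_nonneg _ _ hp0.le, ← ENNReal.rpow_mul,
            ← ENNReal.rpow_mul, he4, (show 1 / p * p = (1:ℝ) from by field_simp),
            ENNReal.rpow_one,
            ENNReal.ofReal_rpow_of_pos (show (0:ℝ) < s * (1 - A)⁻¹ from by positivity),
            ← hcoef,
            ENNReal.ofReal_mul (Real.rpow_nonneg hs1.le _),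
            ENNReal.ofReal_mul (Real.rpow_nonneg
              (mul_nonneg hs0.le (inv_nonneg.2 h1A.le)) _)]
          ring
  -- nonnegativity of the right-hand side integral
  have hIntRHS : 0 ≤ ∫ τ in Ioo (0:ℝ) t, |f τ| ^ p :=
    integral_nonneg fun τ => Real.rpow_nonneg (abs_nonneg _) _
  -- measurable representative of the weighted function
  have hYm : AEMeasurable (fun τ => ENNReal.ofReal (τ ^ ε * |f τ| ^ p))
      (volume.restrict (Ioo (0:ℝ) t)) :=
    ((measurable_id.pow_const ε).aemeasurable.mul hg_meas).ennreal_ofReal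
  obtain ⟨G0, hG0m, hG0e⟩ := hYm
  have hYeq : ∀ s ∈ Ioo (0:ℝ) t, Y s = ∫⁻ τ in Ioo (0:ℝ) s, G0 τ := by
    rintro s ⟨hs0, hst⟩
    exact lintegral_congr_ae (hG0e.filter_mono (ae_mono
      (Measure.restrict_mono (Ioo_subset_Ioo le_rfl hst.le) le_rfl)))
  set Φ : ℝ × ℝ → ℝ≥0∞ :=
    fun z => if z.2 < z.1 then ENNReal.ofReal (z.1 ^ (-1 - ε)) * G0 z.2 else 0 with hΦdef
  have hΦm : Measurable Φ := by
    refine Measurable.ite (measurableSet_lt measurable_snd measurable_fst) ?_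
      measurable_const
    exact ((measurable_fst.pow_const (-1 - ε)).ennreal_ofReal).mul
      (hG0m.comp measurable_snd)
  have hT2 : (∫⁻ s in Ioo (0:ℝ) t, ENNReal.ofReal (s ^ (-1 - ε)) * Y s)
      = ∫⁻ s in Ioo (0:ℝ) t, ∫⁻ τ in Ioo (0:ℝ) t, Φ (s, τ) := by
    refine lintegral_congr_ae ((ae_restrict_mem measurableSet_Ioo).mono fun s hs => ?_)
    rcases hs with ⟨hs0, hst⟩
    have h1 : ∀ τ, Φ (s, τ)
        = (Iio s).indicator (fun τ => ENNReal.ofReal (s ^ (-1 - ε)) * G0 τ) τ := by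
      intro τ
      by_cases h : τ < s <;> simp [hΦdef, h, Set.indicator_apply, mem_Iio]
    have hset : Iio s ∩ Ioo (0:ℝ) t = Ioo (0:ℝ) s := by
      ext x
      simp only [mem_inter_iff, mem_Iio, mem_Ioo]
      constructor
      · rintro ⟨h1', h2', h3'⟩; exact ⟨h2', h1'⟩
      · rintro ⟨h2', h1'⟩; exact ⟨h1', h2', h1'.trans hst⟩
    calc ENNReal.ofReal (s ^ (-1 - ε)) * Y s
        = ∫⁻ τ in Ioo (0:ℝ) s, ENNReal.ofReal (s ^ (-1 - ε)) * G0 τ := by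
          rw [hYeq s ⟨hs0, hst⟩, lintegral_const_mul' _ _ ENNReal.ofReal_ne_top]
      _ = ∫⁻ τ in Ioo (0:ℝ) t, Φ (s, τ) := by
          simp_rw [h1]
          rw [lintegral_indicator measurableSet_Iio,
            Measure.restrict_restrict measurableSet_Iio, hset]
  have hswap : (∫⁻ s in Ioo (0:ℝ) t, ∫⁻ τ in Ioo (0:ℝ) t, Φ (s, τ))
      = ∫⁻ τ in Ioo (0:ℝ) t, ∫⁻ s in Ioo (0:ℝ) t, Φ (s, τ) := by
    exact lintegral_lintegral_swap (hΦm.aemeasurable)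
  have hinner : ∀ᵐ τ ∂(volume.restrict (Ioo (0:ℝ) t)),
      (∫⁻ s in Ioo (0:ℝ) t, Φ (s, τ)) ≤ ENNReal.ofReal (ε⁻¹ * |f τ| ^ p) := by
    filter_upwards [ae_restrict_mem measurableSet_Ioo, hG0e] with τ hτ hGτ
    rcases hτ with ⟨hτ0, hτt⟩
    have h1 : ∀ s, Φ (s, τ)
        = (Ioi τ).indicator (fun s => ENNReal.ofReal (s ^ (-1 - ε))) s * G0 τ := by
      intro s
      by_cases h : τ < s <;> simp [hΦdef, h, Set.indicator_apply, mem_Ioi]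
    have hset : Ioi τ ∩ Ioo (0:ℝ) t = Ioo τ t := by
      ext x
      simp only [mem_inter_iff, mem_Ioi, mem_Ioo]
      constructor
      · rintro ⟨h1', h2', h3'⟩; exact ⟨h1', h3'⟩
      · rintro ⟨h1', h3'⟩; exact ⟨h1', hτ0.trans h1', h3'⟩
    have hG0τ : G0 τ = ENNReal.ofReal (τ ^ ε * |f τ| ^ p) := hGτ.symm
    have hR : (∫⁻ s in Ioo τ t, ENNReal.ofReal (s ^ (-1 - ε)))
        ≤ ENNReal.ofReal (τ ^ (-ε) / ε) := by
      have hint : IntegrableOn (fun s : ℝ => s ^ (-1 - ε)) (Ioo τ t) volume :=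
        ((intervalIntegral.intervalIntegrable_rpow (a := τ) (b := t)
          (Or.inr (notMem_uIcc_of_lt hτ0 ht))).1).mono_set Ioo_subset_Ioc_self
      rw [← ofReal_integral_eq_lintegral_ofReal hint
        ((ae_restrict_mem measurableSet_Ioo).mono fun x hx =>
          Real.rpow_nonneg (le_of_lt (hτ0.trans hx.1)) _)]
      apply ENNReal.ofReal_le_ofReal
      have hval : ∫ s in Ioo τ t, s ^ (-1 - ε)
          = (t ^ (-1 - ε + 1) - τ ^ (-1 - ε + 1)) / (-1 - ε + 1) :=
        by rw [← integral_Ioc_eq_integral_Ioo, ← intervalIntegral.integral_of_le hτt.le,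
          integral_rpow (Or.inr ⟨by intro hcon; exact (by linarith : ε ≠ 0) (by linarith),
            notMem_uIcc_of_lt hτ0 ht⟩)]
      have hexp : (-1 : ℝ) - ε + 1 = -ε := by ring
      rw [hval, hexp]
      have htnn : (0:ℝ) ≤ t ^ (-ε) := Real.rpow_nonneg ht.le _
      have h2' : (t ^ (-ε) - τ ^ (-ε)) / (-ε) = (τ ^ (-ε) - t ^ (-ε)) / ε := by
        rw [div_neg, ← neg_div, neg_sub]
      rw [h2', div_le_div_iff₀ hε hε]
      nlinarith [Real.rpow_nonneg hτ0.le (-ε)]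
    calc (∫⁻ s in Ioo (0:ℝ) t, Φ (s, τ))
        = (∫⁻ s in Ioo τ t, ENNReal.ofReal (s ^ (-1 - ε))) * G0 τ := by
          simp_rw [h1]
          rw [lintegral_mul_const' _ _ (by rw [hG0τ]; exact ENNReal.ofReal_ne_top),
            lintegral_indicator measurableSet_Ioi,
            Measure.restrict_restrict measurableSet_Ioi, hset]
      _ ≤ ENNReal.ofReal (τ ^ (-ε) / ε) * G0 τ := mul_le_mul_left hR _
      _ = ENNReal.ofReal (ε⁻¹ * |f τ| ^ p) := by
          rw [hG0τ, ← ENNReal.ofReal_mul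
            (div_nonneg (Real.rpow_nonneg hτ0.le _) hε.le)]
          congr 1
          have hone : τ ^ (-ε) * τ ^ ε = 1 := by
            rw [← Real.rpow_add hτ0]
            norm_num
          calc τ ^ (-ε) / ε * (τ ^ ε * |f τ| ^ p)
              = τ ^ (-ε) * τ ^ ε * |f τ| ^ p / ε := by ring
            _ = ε⁻¹ * |f τ| ^ p := by rw [hone]; ring
  have hend : (∫⁻ τ in Ioo (0:ℝ) t, ENNReal.ofReal (ε⁻¹ * |f τ| ^ p))
      = ENNReal.ofReal (ε⁻¹ * ∫ τ in Ioo (0:ℝ) t, |f τ| ^ p) := by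
    rw [← integral_const_mul, ofReal_integral_eq_lintegral_ofReal (hf.const_mul _)
      (Filter.Eventually.of_forall fun τ =>
        mul_nonneg (inv_nonneg.2 hε.le) (Real.rpow_nonneg (abs_nonneg _) _))]
  have hTotal : (∫⁻ s in Ioo (0:ℝ) t, ENNReal.ofReal
        (|(1 / s) * ∫ τ in Ioo (0:ℝ) s,
          Real.exp (C * |Real.log (τ / s)| ^ ((1:ℝ)/2)) * f τ| ^ p))
      ≤ ENNReal.ofReal (Kc * ε⁻¹ * ∫ τ in Ioo (0:ℝ) t, |f τ| ^ p) := by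
    calc (∫⁻ s in Ioo (0:ℝ) t, ENNReal.ofReal
          (|(1 / s) * ∫ τ in Ioo (0:ℝ) s,
            Real.exp (C * |Real.log (τ / s)| ^ ((1:ℝ)/2)) * f τ| ^ p))
        ≤ ∫⁻ s in Ioo (0:ℝ) t, ENNReal.ofReal (Kc * s ^ (-1 - ε)) * Y s :=
          lintegral_mono_ae ((ae_restrict_mem measurableSet_Ioo).mono
            fun s hs => key s hs)
      _ = ENNReal.ofReal Kc * ∫⁻ s in Ioo (0:ℝ) t, ENNReal.ofReal (s ^ (-1 - ε)) * Y s := by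
          rw [← lintegral_const_mul' _ _ ENNReal.ofReal_ne_top]
          refine lintegral_congr_ae ((ae_restrict_mem measurableSet_Ioo).mono
            fun s hs => ?_)
          show ENNReal.ofReal (Kc * s ^ (-1 - ε)) * Y s
            = ENNReal.ofReal Kc * (ENNReal.ofReal (s ^ (-1 - ε)) * Y s)
          rw [← mul_assoc, ← ENNReal.ofReal_mul hKc0.le]
      _ = ENNReal.ofReal Kc * ∫⁻ τ in Ioo (0:ℝ) t, ∫⁻ s in Ioo (0:ℝ) t, Φ (s, τ) := by
          rw [hT2, hswap]
      _ ≤ ENNReal.ofReal Kc * ∫⁻ τ in Ioo (0:ℝ) t, ENNReal.ofReal (ε⁻¹ * |f τ| ^ p) :=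
          mul_le_mul_right (lintegral_mono_ae hinner) _
      _ = ENNReal.ofReal (Kc * ε⁻¹ * ∫ τ in Ioo (0:ℝ) t, |f τ| ^ p) := by
          rw [hend, ← ENNReal.ofReal_mul hKc0.le]
          congr 1
          ring
  by_cases hInt : IntegrableOn (fun s => |(1 / s) * ∫ τ in Ioo (0:ℝ) s,
      Real.exp (C * |Real.log (τ / s)| ^ ((1:ℝ)/2)) * f τ| ^ p) (Ioo (0:ℝ) t) volume
  · rw [integral_eq_lintegral_of_nonneg_ae
      (Filter.Eventually.of_forall fun s => Real.rpow_nonneg (abs_nonneg _) _)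
      hInt.aestronglyMeasurable]
    exact (ENNReal.toReal_mono ENNReal.ofReal_ne_top hTotal).trans_eq
      (ENNReal.toReal_ofReal (mul_nonneg (mul_nonneg hKc0.le (inv_nonneg.2 hε.le))
        hIntRHS))
  · rw [integral_undef hInt]
    exact mul_nonneg (mul_nonneg hKc0.le (inv_nonneg.2 hε.le)) hIntRHS

end
end
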